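/- Let (k,l,m) be an admissible triple with r := (l+m−k)/2 ≥ 1, and for N ≥ 3 set q = q(N) ∈ (0,1) with q + 1/q = N. Then lim_{N→∞} (N−2)(N−1)^{r−1} · [k+1]_q/θ_q(k,l,m) = 1. -/

import Mathlib

/-- The quantum integer [n]_q = (q^{-n} - q^n)/(q^{-1} - q), with [0]_q = 0. -/
noncomputable def qint (q : ℝ) (n : ℕ) : ℝ :=
  (q ^ (-(n : ℤ)) - q ^ (n : ℤ)) / (q⁻¹ - q)

/-- The quantum factorial [n]_q!. -/
noncomputable def qfact (q : ℝ) (n : ℕ) : ℝ :=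
  ∏ i ∈ Finset.range n, qint q (i + 1)

/-- The theta-net θ_q(k,l,m) where k = l + m - 2r. -/
noncomputable def qtheta (q : ℝ) (k l m r : ℕ) : ℝ :=
  (qfact q r * qfact q (l - r) * qfact q (m - r) * qfact q (k + r + 1)) /
    (qfact q l * qfact q m * qfact q k)

/-- The quantum parameter q(N) associated to O_N^+, satisfying q + 1/q = N. -/
noncomputable def qparam (N : ℕ) : ℝ :=
  (1 / (N : ℝ)) * (2 / (1 + Real.sqrt (1 - 4 / (N : ℝ) ^ 2)))

/-!
Write `[n]_q = q^(1-n) P_n(q)` with `P_n(q) = ∑_{j<n} q^(2j)` (`qintPoly q n`), so `P_n(0) = 1` for `n ≥ 1`.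
With `l = a + r`, `m = b + r`, `k = a + b`, the factorials in `[k+1]_q / θ_q(k,l,m)` cancel down
to `∏_{i<r} [a+i+1][b+i+1] / ([i+1][a+b+i+2])`, and since the indices in each factor sum to one
less upstairs than downstairs, each factor is `q` times a ratio of `P`'s. On the other side
`N = q + q⁻¹` gives `q (N - 2) = (1 - q)^2` and `q (N - 1) = 1 - q + q^2`, so the powers of `q`
cancel and what is left is a function of `q` continuous at `0` with value `1`; finally `q(N) → 0`.
-/

open Finset Filter Topology

noncomputable def qintPoly (q : ℝ) (n : ℕ) : ℝ := ∑ j ∈ range n, (q ^ 2) ^ j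

@[fun_prop]
theorem continuous_qintPoly (n : ℕ) : Continuous (qintPoly · n) := by
  unfold qintPoly
  fun_prop

theorem qintPoly_zero_succ (n : ℕ) : qintPoly 0 (n + 1) = 1 := by
  simp [qintPoly, sum_range_succ']

theorem qintPoly_succ_pos (q : ℝ) (n : ℕ) : 0 < qintPoly q (n + 1) := by
  rw [qintPoly, sum_range_succ']
  positivity

theorem qfact_add (q : ℝ) (m n : ℕ) :
    qfact q (m + n) = qfact q m * ∏ i ∈ range n, qint q (m + i + 1) :=
  prod_range_add _ m n

section QuantumIntegers

variable {q : ℝ}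

theorem qint_eq_qintPoly (hq : q ≠ 0) (hq1 : q ^ 2 ≠ 1) (n : ℕ) :
    qint q n = q * qintPoly q n / q ^ n := by
  have hgeom : qintPoly q n * (q ^ 2 - 1) = (q ^ 2) ^ n - 1 := geom_sum_mul _ _
  have hden : q⁻¹ - q ≠ 0 := by
    intro h
    apply hq1
    linear_combination (-q) * h + (by field_simp : q * (q⁻¹ - q) = 1 - q ^ 2)
  rw [qint, zpow_neg, zpow_natCast, div_eq_div_iff hden (pow_ne_zero n hq)]
  field_simp
  linear_combination hgeom

theorem qint_succ_ne_zero (hq : q ≠ 0) (hq1 : q ^ 2 ≠ 1) (n : ℕ) : qint q (n + 1) ≠ 0 := by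
  rw [qint_eq_qintPoly hq hq1]
  exact div_ne_zero (mul_ne_zero hq (qintPoly_succ_pos q n).ne') (pow_ne_zero _ hq)

theorem qfact_ne_zero (hq : q ≠ 0) (hq1 : q ^ 2 ≠ 1) (n : ℕ) : qfact q n ≠ 0 :=
  prod_ne_zero_iff.2 fun i _ => qint_succ_ne_zero hq hq1 i

theorem qint_mul_qint_div_qint_mul_qint (hq : q ≠ 0) (hq1 : q ^ 2 ≠ 1) {a b c d : ℕ}
    (h : a + b = c + d + 1) :
    qint q a * qint q b / (qint q (c + 1) * qint q (d + 1)) =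
      q * (qintPoly q a * qintPoly q b / (qintPoly q (c + 1) * qintPoly q (d + 1))) := by
  have hc := (qintPoly_succ_pos q c).ne'
  have hd := (qintPoly_succ_pos q d).ne'
  have hpow : q ^ (c + 1) * q ^ (d + 1) = q * (q ^ a * q ^ b) := by
    rw [← pow_add, ← pow_add, ← pow_succ', h]
    ring
  simp only [qint_eq_qintPoly hq hq1]
  field_simp
  linear_combination qintPoly q a * qintPoly q b * hpow

theorem qint_div_qtheta (hq : q ≠ 0) (hq1 : q ^ 2 ≠ 1) (a b r : ℕ) :
    qint q (a + b + 1) / qtheta q (a + b) (a + r) (b + r) r =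
      ∏ i ∈ range r, qint q (a + i + 1) * qint q (b + i + 1) /
        (qint q (i + 1) * qint q (a + b + 1 + i + 1)) := by
  have hsucc : qfact q (a + b + 1) = qfact q (a + b) * qint q (a + b + 1) := prod_range_succ _ _
  have hfact_r : ∏ i ∈ range r, qint q (i + 1) = qfact q r := rfl
  rw [qtheta, Nat.add_sub_cancel, Nat.add_sub_cancel, show a + b + r + 1 = a + b + 1 + r by omega,
    qfact_add q a r, qfact_add q b r, qfact_add q (a + b + 1) r, hsucc,
    prod_div_distrib, prod_mul_distrib, prod_mul_distrib, hfact_r]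
  have := qfact_ne_zero hq hq1 a
  have := qfact_ne_zero hq hq1 b
  have := qfact_ne_zero hq hq1 r
  have := qfact_ne_zero hq hq1 (a + b)
  have := qint_succ_ne_zero hq hq1 (a + b)
  have : ∏ i ∈ range r, qint q (a + b + 1 + i + 1) ≠ 0 :=
    prod_ne_zero_iff.2 fun i _ => qint_succ_ne_zero hq hq1 _
  field_simp

end QuantumIntegers

section QuantumParameter

variable {N : ℕ}

theorem qparam_eq (hN : 3 ≤ N) :
    qparam N = 2 / ((N : ℝ) * (1 + Real.sqrt (1 - 4 / (N : ℝ) ^ 2))) := by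
  have : (N : ℝ) ≠ 0 := by positivity
  rw [qparam]
  field_simp

theorem qparam_pos (hN : 3 ≤ N) : 0 < qparam N := by
  rw [qparam_eq hN]
  positivity

theorem qparam_lt_one (hN : 3 ≤ N) : qparam N < 1 := by
  have hN' : (3 : ℝ) ≤ N := by exact_mod_cast hN
  have := Real.sqrt_nonneg (1 - 4 / (N : ℝ) ^ 2)
  rw [qparam_eq hN, div_lt_one (by positivity)]
  nlinarith

theorem qparam_add_inv (hN : 3 ≤ N) : qparam N + (qparam N)⁻¹ = N := by
  have hN' : (3 : ℝ) ≤ N := by exact_mod_cast hN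
  have ht : Real.sqrt (1 - 4 / (N : ℝ) ^ 2) ^ 2 = 1 - 4 / (N : ℝ) ^ 2 := by
    refine Real.sq_sqrt ?_
    rw [sub_nonneg, div_le_one (by positivity)]
    nlinarith
  have := Real.sqrt_nonneg (1 - 4 / (N : ℝ) ^ 2)
  rw [qparam_eq hN]
  field_simp at ht ⊢
  nlinarith

end QuantumParameter

theorem tendsto_qparam_atTop : Tendsto qparam atTop (𝓝 0) := by
  refine tendsto_of_tendsto_of_tendsto_of_le_of_le' tendsto_const_nhds
    (tendsto_const_div_atTop_nhds_zero_nat 2) ?_ ?_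
  · filter_upwards [eventually_ge_atTop 3] with N hN using (qparam_pos hN).le
  · filter_upwards [eventually_ge_atTop 3] with N hN
    have := Real.sqrt_nonneg (1 - 4 / (N : ℝ) ^ 2)
    rw [qparam_eq hN]
    gcongr
    exact le_mul_of_one_le_right N.cast_nonneg (le_add_of_nonneg_right this)

noncomputable def normalizedThetaRatio (a b r : ℕ) (q : ℝ) : ℝ :=
  (1 - q) ^ 2 * (1 - q + q ^ 2) ^ (r - 1) *
    ∏ i ∈ range r, qintPoly q (a + i + 1) * qintPoly q (b + i + 1) /
      (qintPoly q (i + 1) * qintPoly q (a + b + 1 + i + 1))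

section NormalizedThetaRatio

variable {q : ℝ}

theorem add_inv_sub_two_mul_add_inv_sub_one_pow (hq : q ≠ 0) (s : ℕ) :
    (q + q⁻¹ - 2) * (q + q⁻¹ - 1) ^ s * q ^ (s + 1) = (1 - q) ^ 2 * (1 - q + q ^ 2) ^ s := by
  have h2 : (q + q⁻¹ - 2) * q = (1 - q) ^ 2 := by field_simp; ring
  have h1 : (q + q⁻¹ - 1) * q = 1 - q + q ^ 2 := by field_simp; ring
  rw [← h2, ← h1, mul_pow, pow_succ']
  ring

theorem mul_qint_div_qtheta (hq : q ≠ 0) (hq1 : q ^ 2 ≠ 1) (a b : ℕ) {r : ℕ} (hr : 1 ≤ r) :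
    (q + q⁻¹ - 2) * (q + q⁻¹ - 1) ^ (r - 1) *
        (qint q (a + b + 1) / qtheta q (a + b) (a + r) (b + r) r) =
      normalizedThetaRatio a b r q := by
  obtain ⟨s, rfl⟩ := Nat.exists_eq_add_of_le' hr
  rw [qint_div_qtheta hq hq1,
    prod_congr rfl fun i _ => qint_mul_qint_div_qint_mul_qint hq hq1 (by omega),
    prod_mul_distrib, prod_const, card_range, normalizedThetaRatio, Nat.add_sub_cancel,
    ← add_inv_sub_two_mul_add_inv_sub_one_pow hq s]
  ring

end NormalizedThetaRatio

theorem tendsto_normalizedThetaRatio (a b r : ℕ) :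
    Tendsto (normalizedThetaRatio a b r) (𝓝 0) (𝓝 1) := by
  have hcont : ContinuousAt (normalizedThetaRatio a b r) 0 := by
    unfold normalizedThetaRatio
    fun_prop (disch := simp [qintPoly_zero_succ])
  simpa [normalizedThetaRatio, qintPoly_zero_succ] using hcont.tendsto

theorem asymptotic_maximal_entanglement (k l m r : ℕ) (hr1 : 1 ≤ r)
    (hr : r ≤ min l m) (hk : k + 2 * r = l + m) :
    Filter.Tendsto
      (fun N : ℕ => ((N : ℝ) - 2) * ((N : ℝ) - 1) ^ (r - 1) *
        (qint (qparam N) (k + 1) / qtheta (qparam N) k l m r))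
      Filter.atTop (nhds 1) := by
  obtain ⟨a, rfl⟩ := Nat.exists_eq_add_of_le' (hr.trans (min_le_left l m))
  obtain ⟨b, rfl⟩ := Nat.exists_eq_add_of_le' (hr.trans (min_le_right (a + r) m))
  obtain rfl : k = a + b := by omega
  refine ((tendsto_normalizedThetaRatio a b r).comp tendsto_qparam_atTop).congr' ?_
  filter_upwards [eventually_ge_atTop 3] with N hN
  have hq := qparam_pos hN
  have hq1 : qparam N ^ 2 ≠ 1 := (pow_lt_one₀ hq.le (qparam_lt_one hN) two_ne_zero).ne
  rw [Function.comp_apply, ← mul_qint_div_qtheta hq.ne' hq1 a b hr1, qparam_add_inv hN]
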